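/- For every x ∈ X, every s_0, …, s_n ∈ S^n, all parameter tuples (t_1,…,t_n), (u_1,…,u_n) ∈ [0,1]^n and every g ∈ G: d_{S^n,n,Λ}( (Γ(s_n,t_n,…,s_0,x), g), (Γ(s_n,u_n,…,s_0,x), g) ) ≤ 2. -/

import Mathlib

open scoped ENNReal

structure HomotopyCoherentAction (G : Type*) [Group G] (X : Type*) [TopologicalSpace X] where
  Γ : List (G × unitInterval) → G → X → X
  continuous' : ∀ (k : ℕ) (γ : Fin k → G) (γ₀ : G),
    Continuous fun p : (Fin k → unitInterval) × X =>
      Γ (List.ofFn fun i => (γ i, p.1 i)) γ₀ p.2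
  split : ∀ (L₁ L₂ : List (G × unitInterval)) (γ γ₀ : G) (x : X),
    Γ (L₁ ++ (γ, 0) :: L₂) γ₀ x = Γ L₁ γ (Γ L₂ γ₀ x)
  mul_mid : ∀ (L₁ L₂ : List (G × unitInterval)) (γ γ' : G) (t : unitInterval) (γ₀ : G) (x : X),
    Γ (L₁ ++ (γ, 1) :: (γ', t) :: L₂) γ₀ x = Γ (L₁ ++ (γ * γ', t) :: L₂) γ₀ x
  mul_last : ∀ (L₁ : List (G × unitInterval)) (γ γ₀ : G) (x : X),
    Γ (L₁ ++ [(γ, 1)]) γ₀ x = Γ L₁ (γ * γ₀) x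
  base_one : ∀ (L : List (G × unitInterval)) (γ₁ : G) (t₁ : unitInterval) (x : X),
    Γ (L ++ [(γ₁, t₁)]) 1 x = Γ L γ₁ x
  unit_mid : ∀ (L₁ L₂ : List (G × unitInterval)) (γ' : G) (t' t : unitInterval) (γ₀ : G) (x : X),
    Γ (L₁ ++ (γ', t') :: (1, t) :: L₂) γ₀ x = Γ (L₁ ++ (γ', t' * t) :: L₂) γ₀ x
  unit_head : ∀ (L : List (G × unitInterval)) (t : unitInterval) (γ₀ : G) (x : X),
    Γ ((1, t) :: L) γ₀ x = Γ L γ₀ x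
  unit_nil : ∀ x : X, Γ [] 1 x = x

variable {G : Type*} [Group G] {X : Type*}

/-- `Γ(r_k, t_k, …, r_1, t_1, r_0, z)` for `r : Fin (k+1) → G`, `t : Fin k → [0,1]`. -/
def gammaWord [TopologicalSpace X] (A : HomotopyCoherentAction G X) {k : ℕ}
    (r : Fin (k + 1) → G) (t : Fin k → unitInterval) (z : X) : X :=
  A.Γ ((List.ofFn fun j : Fin k => (r j.succ, t j)).reverse) (r 0) z

/-- The condition that the data `(xs, zs, a, b)` forms an admissible chain from `(x,g)` to
`(y,h)` in the definition of the extended metric `d_{S,k,Λ}`. -/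
def ChainCond [MetricSpace X] (A : HomotopyCoherentAction G X) (S : Set G) (k : ℕ)
    (x y : X) (g h : G) {l : ℕ} (xs zs : Fin (l + 1) → X) (a b : Fin l → G) : Prop :=
  xs 0 = x ∧ zs (Fin.last l) = y ∧
  g * (List.ofFn fun i : Fin l => (a i)⁻¹ * b i).prod = h ∧
  ∀ i : Fin l, ∃ (r s : Fin (k + 1) → G) (t u : Fin k → unitInterval),
    (∀ j, r j ∈ S) ∧ (∀ j, s j ∈ S) ∧
    a i = (List.ofFn r).reverse.prod ∧ b i = (List.ofFn s).reverse.prod ∧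
    gammaWord A r t (zs i.castSucc) = gammaWord A s u (xs i.succ)

/-- The extended metric `d_{S,k,Λ}` on `X × G`. -/
noncomputable def coherentDist [MetricSpace X] (A : HomotopyCoherentAction G X)
    (S : Set G) (k : ℕ) (Λ : ℝ) (p q : X × G) : ℝ≥0∞ :=
  ⨅ (l : ℕ) (xs : Fin (l + 1) → X) (zs : Fin (l + 1) → X) (a : Fin l → G) (b : Fin l → G)
    (_ : ChainCond A S k p.1 q.1 p.2 q.2 xs zs a b),
      (l : ℝ≥0∞) + ∑ i : Fin (l + 1), ENNReal.ofReal (Λ * dist (xs i) (zs i))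

open scoped Pointwise

/-! Insert the intermediate point `(x, g)`: the identity word carries `x` to itself while
`s` carries it to either endpoint, so the chain `(Γ(s,t,x), g) → (x, g) → (Γ(s,u,x), g)` with
jumps `a = (1, ∏ s)`, `b = (∏ s, 1)` has total group displacement `1` and all its
`X`-distances vanish. Its cost is its length `2`. -/

namespace HomotopyCoherentAction

variable [TopologicalSpace X]

theorem Γ_one_of_forall_fst_eq_one (A : HomotopyCoherentAction G X) :
    ∀ L : List (G × unitInterval), (∀ p ∈ L, p.1 = 1) → ∀ z : X, A.Γ L 1 z = z
  | [], _, z => A.unit_nil z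
  | (_, t) :: L, hL, z => by
    obtain rfl : _ = (1 : G) := hL _ List.mem_cons_self
    rw [A.unit_head]
    exact A.Γ_one_of_forall_fst_eq_one L (fun p hp => hL p (List.mem_cons_of_mem _ hp)) z

end HomotopyCoherentAction

section

theorem gammaWord_one [TopologicalSpace X] (A : HomotopyCoherentAction G X) {k : ℕ}
    (t : Fin k → unitInterval) (z : X) : gammaWord A 1 t z = z := by
  refine A.Γ_one_of_forall_fst_eq_one _ (fun p hp => ?_) z
  obtain ⟨j, rfl⟩ := List.mem_ofFn.mp (List.mem_reverse.mp hp)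
  rfl

variable [MetricSpace X] (A : HomotopyCoherentAction G X) {S : Set G} {k : ℕ}

theorem coherentDist_le_of_chainCond (Λ : ℝ) {p q : X × G} {l : ℕ} {xs zs : Fin (l + 1) → X}
    {a b : Fin l → G} (h : ChainCond A S k p.1 q.1 p.2 q.2 xs zs a b) :
    coherentDist A S k Λ p q ≤ l + ∑ i, ENNReal.ofReal (Λ * dist (xs i) (zs i)) :=
  iInf_le_of_le l <| iInf_le_of_le xs <| iInf_le_of_le zs <| iInf_le_of_le a <|
    iInf_le_of_le b <| iInf_le_of_le h le_rfl

theorem coherentDist_le_of_chainCond_of_eq (Λ : ℝ) {p q : X × G} {l : ℕ}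
    {xs : Fin (l + 1) → X} {a b : Fin l → G} (h : ChainCond A S k p.1 q.1 p.2 q.2 xs xs a b) :
    coherentDist A S k Λ p q ≤ l := by
  simpa using coherentDist_le_of_chainCond A Λ h

theorem chainCond_gammaWord_params (hS1 : (1 : G) ∈ S) {s : Fin (k + 1) → G}
    (hs : ∀ j, s j ∈ S) (t u : Fin k → unitInterval) (x : X) (g : G) :
    ChainCond A S k (gammaWord A s t x) (gammaWord A s u x) g g
      ![gammaWord A s t x, x, gammaWord A s u x] ![gammaWord A s t x, x, gammaWord A s u x]
      ![1, (List.ofFn s).reverse.prod] ![(List.ofFn s).reverse.prod, 1] := by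
  have h1 : ∀ j : Fin (k + 1), (1 : Fin (k + 1) → G) j ∈ S := fun _ => hS1
  refine ⟨rfl, rfl, by simp [List.ofFn_succ], fun i => ?_⟩
  fin_cases i
  · exact ⟨1, s, t, t, h1, hs, by simp, rfl, by simp [gammaWord_one]⟩
  · exact ⟨s, 1, u, u, hs, h1, rfl, by simp, by simp [gammaWord_one]⟩

end

theorem dist_params_le_two_general {G : Type*} [Group G] {X : Type*} [MetricSpace X]
    (A : HomotopyCoherentAction G X) (S : Set G) (hS1 : (1 : G) ∈ S)
    (n : ℕ) (Λ : ℝ)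
    (s : Fin (n + 1) → G) (hs : ∀ j, s j ∈ S ^ n)
    (t u : Fin n → unitInterval) (x : X) (g : G) :
    coherentDist A (S ^ n) n Λ (gammaWord A s t x, g) (gammaWord A s u x, g) ≤ 2 := by
  exact_mod_cast coherentDist_le_of_chainCond_of_eq A Λ
    (chainCond_gammaWord_params A (Set.one_mem_pow hS1) hs t u x g)

/-- For every `x ∈ X`, elements `s_0,…,s_n ∈ S^n`, all parameter tuples `t, u ∈ [0,1]^n`
and every `g ∈ G`, the distance between `(Γ(s_n,t_n,…,s_0,x), g)` and
`(Γ(s_n,u_n,…,s_0,x), g)` in `d_{S^n,n,Λ}` is at most `2`. -/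
theorem dist_params_le_two {G : Type*} [Group G] {X : Type*} [MetricSpace X]
    (A : HomotopyCoherentAction G X) (S : Set G) (hSfin : S.Finite) (hS1 : (1 : G) ∈ S)
    (hSsymm : S⁻¹ = S) (n : ℕ) (Λ : ℝ) (hΛ : 0 < Λ)
    (s : Fin (n + 1) → G) (hs : ∀ j, s j ∈ S ^ n)
    (t u : Fin n → unitInterval) (x : X) (g : G) :
    coherentDist A (S ^ n) n Λ (gammaWord A s t x, g) (gammaWord A s u x, g) ≤ 2 :=
  dist_params_le_two_general A S hS1 n Λ s hs t u x g
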